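/- arXiv:1905.07794 — 2 statements merged into one kernel-verified Lean document; each statement's English description precedes it below -/
import Mathlib

section
/- The function H(x,y) = (1/2)e^{γx²}y² + (ω²/(2γ))e^{γx²} + ∫ e^{γx²}(αx² + βx³) dx is a first integral (conserved quantity) of the planar system ẋ = y, ẏ = -ω²x - αx² - βx³ - γxy²: along any solution, d/dt H(x(t), y(t)) = 0. -/
open Real intervalIntegral

/- With `m(x) = e^{γx²}` the system reads `(m y)˙ = ½ m' y² − V'(x)`: a motion with position-dependent
mass `m` in the potential `V = ω²/(2γ) m + F`, whose derivative is `m (ω²x + αx² + βx³)`, and `H = ½ m y² + V`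
is its energy. Along any curve with `ẋ = y`, `Ḣ = m y (ẏ + γxy² + ω²x + αx² + βx³)`, and the bracket
vanishes on solutions. -/

noncomputable def potential (ω α β γ u : ℝ) : ℝ :=
  ω ^ 2 / (2 * γ) * exp (γ * u ^ 2) + ∫ s in (0 : ℝ)..u, exp (γ * s ^ 2) * (α * s ^ 2 + β * s ^ 3)

lemma hasDerivAt_potential (ω α β : ℝ) {γ : ℝ} (hγ : γ ≠ 0) (u : ℝ) :
    HasDerivAt (potential ω α β γ) (exp (γ * u ^ 2) * (ω ^ 2 * u + α * u ^ 2 + β * u ^ 3)) u := by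
  have hexp : HasDerivAt (fun u => exp (γ * u ^ 2)) (exp (γ * u ^ 2) * (γ * (2 * u))) u := by
    simpa using ((hasDerivAt_pow 2 u).const_mul γ).exp
  have hint : HasDerivAt (fun u => ∫ s in (0 : ℝ)..u, exp (γ * s ^ 2) * (α * s ^ 2 + β * s ^ 3))
      (exp (γ * u ^ 2) * (α * u ^ 2 + β * u ^ 3)) u :=
    (Continuous.integral_hasStrictDerivAt (by fun_prop) 0 u).hasDerivAt
  refine ((hexp.const_mul (ω ^ 2 / (2 * γ))).fun_add hint).congr_deriv ?_
  field_simp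
  ring

lemma hasDerivAt_energy_comp (ω α β : ℝ) {γ : ℝ} (hγ : γ ≠ 0) {x y : ℝ → ℝ} {v t : ℝ}
    (hx : HasDerivAt x (y t) t) (hy : HasDerivAt y v t) :
    HasDerivAt (fun s => 1 / 2 * (exp (γ * x s ^ 2) * y s ^ 2) + potential ω α β γ (x s))
      (exp (γ * x t ^ 2) * y t
        * (v + γ * x t * y t ^ 2 + ω ^ 2 * x t + α * x t ^ 2 + β * x t ^ 3)) t := by
  have hm : HasDerivAt (fun s => exp (γ * x s ^ 2)) (exp (γ * x t ^ 2) * (γ * (2 * x t * y t))) t := by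
    simpa using ((hx.fun_pow 2).const_mul γ).exp
  have hkin := (hm.fun_mul (hy.fun_pow 2)).const_mul (1 / 2 : ℝ)
  have hpot := (hasDerivAt_potential ω α β hγ (x t)).comp t hx
  refine (hkin.fun_add hpot).congr_deriv ?_
  norm_num
  ring

/-- H is a first integral of ẋ = y, ẏ = -ω²x - αx² - βx³ - γxy². -/
theorem stmt1 (ω α β γ : ℝ) (hγ : γ ≠ 0) (x y : ℝ → ℝ)
    (hx : ∀ t, HasDerivAt x (y t) t)
    (hy : ∀ t, HasDerivAt y
      (-(ω^2 * x t) - α * x t ^ 2 - β * x t ^ 3 - γ * x t * y t ^ 2) t)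
    (F : ℝ → ℝ)
    (hF : ∀ u, F u = ∫ s in (0:ℝ)..u, Real.exp (γ * s^2) * (α * s^2 + β * s^3))
    (H : ℝ → ℝ → ℝ)
    (hH : ∀ u v, H u v = (1/2) * Real.exp (γ * u^2) * v^2
      + (ω^2 / (2*γ)) * Real.exp (γ * u^2) + F u) :
    ∀ t, HasDerivAt (fun s => H (x s) (y s)) 0 t := by
  have hH_eq : (fun s => H (x s) (y s))
      = fun s => 1 / 2 * (exp (γ * x s ^ 2) * y s ^ 2) + potential ω α β γ (x s) := by
    funext s
    rw [hH, hF, potential]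
    ring
  intro t
  rw [hH_eq]
  refine (hasDerivAt_energy_comp ω α β hγ (hx t) (hy t)).congr_deriv ?_
  ring
end

section
/- The planar system ẋ = y, ẏ = -ω²x - αx² - βx³ - γxy² can be written in generalized Hamiltonian form: ẋ = a(x) ∂H/∂y and ẏ = -a(x) ∂H/∂x, where a(x) = e^{-γx²} and H is as defined. -/
/-! The weight `a = e^{-γx²}` is the reciprocal of the integrating factor `e^{γx²}`:
`∂H/∂y = e^{γx²} y` and `∂H/∂x = e^{γx²} (γxy² + ω²x + αx² + βx³)`, where the first two
terms come from differentiating `e^{γx²}` and the last two are `F'` by the fundamental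
theorem of calculus. -/

open Real

lemma hasDerivAt_exp_const_mul_sq (γ u : ℝ) :
    HasDerivAt (fun x => exp (γ * x ^ 2)) (exp (γ * u ^ 2) * (2 * γ * u)) u := by
  simpa [mul_comm, mul_left_comm, mul_assoc] using ((hasDerivAt_pow 2 u).const_mul γ).exp

section Hamiltonian

variable {ω γ : ℝ} {F : ℝ → ℝ}

lemma hasDerivAt_hamiltonian_fst (hγ : γ ≠ 0) {f u : ℝ} (hF : HasDerivAt F f u) (v : ℝ) :
    HasDerivAt (fun x => 1 / 2 * exp (γ * x ^ 2) * v ^ 2 + ω ^ 2 / (2 * γ) * exp (γ * x ^ 2)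
        + F x) (exp (γ * u ^ 2) * (γ * u * v ^ 2 + ω ^ 2 * u) + f) u := by
  have hexp := hasDerivAt_exp_const_mul_sq γ u
  refine ((((hexp.const_mul (1 / 2)).mul_const (v ^ 2)).add
    (hexp.const_mul (ω ^ 2 / (2 * γ)))).add hF).congr_deriv ?_
  field_simp

lemma hasDerivAt_hamiltonian_snd (u v : ℝ) :
    HasDerivAt (fun y => 1 / 2 * exp (γ * u ^ 2) * y ^ 2 + ω ^ 2 / (2 * γ) * exp (γ * u ^ 2)
        + F u) (exp (γ * u ^ 2) * v) v := by
  refine ((((hasDerivAt_pow 2 v).const_mul (1 / 2 * exp (γ * u ^ 2))).add_const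
    (ω ^ 2 / (2 * γ) * exp (γ * u ^ 2))).add_const (F u)).congr_deriv ?_
  norm_num
  ring

end Hamiltonian

lemma exp_neg_mul_sq_mul_exp_mul_sq_mul (γ u x : ℝ) :
    exp (-γ * u ^ 2) * (exp (γ * u ^ 2) * x) = x := by
  rw [← mul_assoc, ← exp_add]
  simp

/-- The system ẋ = y, ẏ = -ω²x - αx² - βx³ - γxy² is in generalized Hamiltonian
form: ẋ = a(x) ∂H/∂y, ẏ = -a(x) ∂H/∂x with a(x) = e^{-γx²}. -/
theorem stmt2 (ω α β γ : ℝ) (hγ : γ ≠ 0)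
    (a : ℝ → ℝ) (ha : ∀ u, a u = Real.exp (-γ * u^2))
    (F : ℝ → ℝ)
    (hF : ∀ u, F u = ∫ s in (0:ℝ)..u, Real.exp (γ * s^2) * (α * s^2 + β * s^3))
    (H : ℝ → ℝ → ℝ)
    (hH : ∀ u v, H u v = (1/2) * Real.exp (γ * u^2) * v^2
      + (ω^2 / (2*γ)) * Real.exp (γ * u^2) + F u) :
    ∃ Hx Hy : ℝ → ℝ → ℝ,
      (∀ u v, HasDerivAt (fun u' => H u' v) (Hx u v) u) ∧
      (∀ u v, HasDerivAt (fun v' => H u v') (Hy u v) v) ∧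
      (∀ u v, v = a u * Hy u v) ∧
      (∀ u v, -(ω^2 * u) - α * u^2 - β * u^3 - γ * u * v^2 = -(a u * Hx u v)) := by
  have hF_deriv (u : ℝ) : HasDerivAt F (exp (γ * u ^ 2) * (α * u ^ 2 + β * u ^ 3)) u := by
    rw [funext hF]
    exact (by fun_prop : Continuous fun s : ℝ => exp (γ * s ^ 2) * (α * s ^ 2 + β * s ^ 3))
      |>.integral_hasStrictDerivAt 0 u |>.hasDerivAt
  obtain rfl : H = _ := funext₂ hH
  refine ⟨fun u v => exp (γ * u ^ 2) * (γ * u * v ^ 2 + ω ^ 2 * u)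
      + exp (γ * u ^ 2) * (α * u ^ 2 + β * u ^ 3), fun u v => exp (γ * u ^ 2) * v,
    fun u v => hasDerivAt_hamiltonian_fst hγ (hF_deriv u) v, hasDerivAt_hamiltonian_snd,
    fun u v => ?_, fun u v => ?_⟩
  · rw [ha, exp_neg_mul_sq_mul_exp_mul_sq_mul]
  · beta_reduce
    rw [ha, ← mul_add, exp_neg_mul_sq_mul_exp_mul_sq_mul]
    ring
end
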